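/- arXiv:1305.2400 — 4 statements merged into one kernel-verified Lean document; each statement's English description precedes it below -/
import Mathlib

section
/- Let α be the matrix with rows (x₀, x₀), (x₁, 0), (0, x₂) over R = k[x₀,x₁,x₂], and let d = (x₁x₂, −x₀x₂, −x₀x₁) be the vector of its signed maximal minors. Then every syzygy of d, i.e., every triple (p₀,p₁,p₂) ∈ R³ with p₀x₁x₂ − p₁x₀x₂ − p₂x₀x₁ = 0, is an R-linear combination of the two columns of α, namely of (x₀, x₁, 0) and (x₀, 0, x₂). -/
/-! A syzygy `(p₀, p₁, p₂)` forces `x₀ ∣ p₀ x₁ x₂`, hence `p₀ = q x₀` since the variables are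
pairwise non-associated primes. Cancelling `x₀` leaves `p₁ x₂ + p₂ x₁ = q x₁ x₂`, so likewise
`p₁ = a x₁` and then `p₂ = (q - a) x₂`, which exhibits `p = a (x₀, x₁, 0) + (q - a) (x₀, 0, x₂)`. -/

open MvPolynomial

namespace MvPolynomial

theorem X_dvd_of_dvd_mul_X {R σ : Type*} [CommRing R] [IsCancelMulZero R] {i j : σ}
    {p : MvPolynomial σ R} (hij : i ≠ j) (h : X i ∣ p * X j) : X i ∣ p := by
  nontriviality R
  exact (X_dvd_mul_iff.mp h).resolve_right (mt X_dvd_X.mp hij)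

end MvPolynomial

theorem syzygies_generated_by_columns (k : Type*) [Field k]
    (p : Fin 3 → MvPolynomial (Fin 3) k)
    (h : p 0 * (X 1 * X 2) - p 1 * (X 0 * X 2) - p 2 * (X 0 * X 1) = 0) :
    ∃ a b : MvPolynomial (Fin 3) k,
      p 0 = a * X 0 + b * X 0 ∧ p 1 = a * X 1 ∧ p 2 = b * X 2 := by
  obtain ⟨q, hq⟩ : X 0 ∣ p 0 :=
    X_dvd_of_dvd_mul_X (j := 1) (by decide) <| X_dvd_of_dvd_mul_X (j := 2) (by decide)
      ⟨p 1 * X 2 + p 2 * X 1, by linear_combination h⟩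
  have h₁ : p 1 * X 2 + p 2 * X 1 = q * X 1 * X 2 :=
    mul_left_cancel₀ (X_ne_zero 0) (by rw [hq] at h; linear_combination -h)
  obtain ⟨a, ha⟩ : X 1 ∣ p 1 :=
    X_dvd_of_dvd_mul_X (j := 2) (by decide) ⟨q * X 2 - p 2, by linear_combination h₁⟩
  have h₂ : p 2 = (q - a) * X 2 :=
    mul_left_cancel₀ (X_ne_zero 1) (by rw [ha] at h₁; linear_combination h₁)
  exact ⟨a, q - a, by rw [hq]; ring, by rw [ha]; ring, h₂⟩
end

section
/- Let α be the matrix with rows (y₁, y₂), (y₀, 0), (0, y₀) over R = k[y₀,y₁,y₂], whose signed maximal minors are (y₀², −y₀y₁, −y₀y₂). Then the syzygy module of (y₀², −y₀y₁, −y₀y₂), i.e., the module of triples (p₀,p₁,p₂) with p₀y₀² − p₁y₀y₁ − p₂y₀y₂ = 0, is generated by the two columns of α together with the extra syzygy (0, y₂, −y₁). -/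
open MvPolynomial

private noncomputable def psi {k : Type*} [Field k] (i : Fin 3) :
    MvPolynomial (Fin 3) k →ₐ[k] MvPolynomial (Fin 3) k :=
  aeval (Function.update X i 0)

private lemma X_dvd_sub_psi {k : Type*} [Field k] (i : Fin 3)
    (q : MvPolynomial (Fin 3) k) : (X i : MvPolynomial (Fin 3) k) ∣ q - psi i q := by
  induction q using MvPolynomial.induction_on with
  | C a => simp [psi]
  | add p q hp hq =>
      have : p + q - psi i (p + q) = (p - psi i p) + (q - psi i q) := by
        rw [map_add]; ring
      rw [this]; exact dvd_add hp hq
  | mul_X q j hq =>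
      rw [map_mul]
      by_cases hji : j = i
      · rw [hji]
        have : psi i (X i : MvPolynomial (Fin 3) k) = 0 := by simp [psi]
        rw [this, mul_zero, sub_zero]
        exact Dvd.dvd.mul_left dvd_rfl q
      · have hx : psi i (X j : MvPolynomial (Fin 3) k) = X j := by simp [psi, Function.update_of_ne hji]
        have : q * X j - psi i q * psi i (X j) = (q - psi i q) * X j := by
          rw [hx]; ring
        rw [this]
        exact hq.mul_right _

private lemma X_dvd_of_psi_eq_zero {k : Type*} [Field k] (i : Fin 3)
    (q : MvPolynomial (Fin 3) k) (h : psi i q = 0) : (X i : MvPolynomial (Fin 3) k) ∣ q := by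
  have := X_dvd_sub_psi i q
  rwa [h, sub_zero] at this

theorem syzygies_with_common_factor (k : Type*) [Field k]
    (p : Fin 3 → MvPolynomial (Fin 3) k)
    (h : p 0 * (X 0 ^ 2) - p 1 * (X 0 * X 1) - p 2 * (X 0 * X 2) = 0) :
    ∃ a b c : MvPolynomial (Fin 3) k,
      p 0 = a * X 1 + b * X 2 ∧ p 1 = a * X 0 + c * X 2 ∧ p 2 = b * X 0 - c * X 1 := by
  have hX0 : (X 0 : MvPolynomial (Fin 3) k) ≠ 0 := X_ne_zero 0
  have hX1 : (X 1 : MvPolynomial (Fin 3) k) ≠ 0 := X_ne_zero 1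
  have E : p 0 * X 0 = p 1 * X 1 + p 2 * X 2 := by
    have : (X 0 : MvPolynomial (Fin 3) k) * (p 0 * X 0 - (p 1 * X 1 + p 2 * X 2)) = 0 := by
      linear_combination h
    rcases mul_eq_zero.mp this with h' | h'
    · exact absurd h' hX0
    · linear_combination h'
  -- apply psi 0
  have hψ0X0 : psi (k := k) 0 (X 0) = 0 := by simp [psi]
  have hψ0X1 : psi (k := k) 0 (X 1) = X 1 := by
    simp [psi, Function.update_of_ne (show (1:Fin 3) ≠ 0 by decide)]
  have hψ0X2 : psi (k := k) 0 (X 2) = X 2 := by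
    simp [psi, Function.update_of_ne (show (2:Fin 3) ≠ 0 by decide)]
  have E0 : psi 0 (p 1) * X 1 + psi 0 (p 2) * X 2 = 0 := by
    have := congrArg (psi (k := k) 0) E
    simp only [map_add, map_mul, hψ0X0, hψ0X1, hψ0X2, mul_zero] at this
    linear_combination -this
  -- apply psi 1 to E0 to get X1 ∣ psi 0 (p 2)
  have hψ1X1 : psi (k := k) 1 (X 1) = 0 := by simp [psi]
  have hψ1X2 : psi (k := k) 1 (X 2) = X 2 := by
    simp [psi, Function.update_of_ne (show (2:Fin 3) ≠ 1 by decide)]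
  have h1 : psi 1 (psi 0 (p 2)) = 0 := by
    have := congrArg (psi (k := k) 1) E0
    simp only [map_add, map_mul, map_zero, hψ1X1, hψ1X2, mul_zero, zero_add] at this
    rcases mul_eq_zero.mp this with h' | h'
    · exact h'
    · exact absurd h' (X_ne_zero 2)
  obtain ⟨d, hd⟩ := X_dvd_of_psi_eq_zero 1 _ h1
  have hp1ψ : psi 0 (p 1) = -(X 2) * d := by
    have hz : (X 1 : MvPolynomial (Fin 3) k) * (psi 0 (p 1) + X 2 * d) = 0 := by
      linear_combination E0 - X 2 * hd
    rcases mul_eq_zero.mp hz with h' | h'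
    · exact absurd h' hX1
    · linear_combination h'
  obtain ⟨a, hA⟩ : (X 0 : MvPolynomial (Fin 3) k) ∣ p 1 - (-d) * X 2 := by
    have heq : p 1 - (-d) * X 2 = p 1 - psi 0 (p 1) := by rw [hp1ψ]; ring
    rw [heq]; exact X_dvd_sub_psi 0 (p 1)
  obtain ⟨b, hB⟩ : (X 0 : MvPolynomial (Fin 3) k) ∣ p 2 + (-d) * X 1 := by
    have heq : p 2 + (-d) * X 1 = p 2 - psi 0 (p 2) := by rw [hd]; ring
    rw [heq]; exact X_dvd_sub_psi 0 (p 2)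
  refine ⟨a, b, -d, ?_, by linear_combination hA, by linear_combination hB⟩
  have hz : (X 0 : MvPolynomial (Fin 3) k) * (p 0 - (a * X 1 + b * X 2)) = 0 := by
    linear_combination E + X 1 * hA + X 2 * hB
  rcases mul_eq_zero.mp hz with h' | h'
  · exact absurd h' hX0
  · linear_combination h'
end

section
/- If two 3×3 matrices A and B over R = k[x₀,x₁,x₂] have the same first two columns, say with rows (x₀,x₀,·), (x₁,0,·), (0,x₂,·), and the same determinant, then B = A·U for an upper triangular matrix U = [[1,0,a],[0,1,b],[0,0,1]] with a, b ∈ R of the appropriate degrees; in particular the cokernels of A and B as maps R³ → R³ are isomorphic. -/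
/-!
Expanding along the last column, `det A = x₁x₂p₀ - x₀x₂p₁ - x₀x₁p₂`, so `det A = det B` says that
`q - p` is a syzygy of the `2 × 2` minors of the common first two columns. As `x₁` and `x₂` are
primes not dividing the other products, such a syzygy is a combination `a (x₀, x₁, 0) + b (x₀, 0, x₂)`
of those columns, which is exactly `B = A U`. The unipotent `U` is invertible, so `A` and `B` have the
same image, hence the same cokernel.
-/

open MvPolynomial

theorem exists_eq_of_syzygy_minors {R : Type*} [CommRing R] [IsDomain R] {x₀ x₁ x₂ : R}
    (h₁ : Prime x₁) (h₂ : Prime x₂) (h₁₀₂ : ¬x₁ ∣ x₀ * x₂) (h₂₀₁ : ¬x₂ ∣ x₀ * x₁) {d₀ d₁ d₂ : R}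
    (h : x₁ * x₂ * d₀ - x₀ * x₂ * d₁ - x₀ * x₁ * d₂ = 0) :
    ∃ a b, d₀ = x₀ * (a + b) ∧ d₁ = x₁ * a ∧ d₂ = x₂ * b := by
  obtain ⟨a, ha⟩ : x₁ ∣ d₁ :=
    (h₁.dvd_or_dvd ⟨x₂ * d₀ - x₀ * d₂, by linear_combination -h⟩).resolve_left h₁₀₂
  obtain ⟨b, hb⟩ : x₂ ∣ d₂ :=
    (h₂.dvd_or_dvd ⟨x₁ * d₀ - x₀ * d₁, by linear_combination -h⟩).resolve_left h₂₀₁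
  refine ⟨a, b, mul_left_cancel₀ (mul_ne_zero h₁.ne_zero h₂.ne_zero) ?_, ha, hb⟩
  linear_combination h + x₀ * x₂ * ha + x₀ * x₁ * hb

theorem MvPolynomial.not_X_dvd_X_mul_X {σ R : Type*} [CommRing R] [IsDomain R] {i j l : σ}
    (hij : i ≠ j) (hil : i ≠ l) : ¬(X i : MvPolynomial σ R) ∣ X j * X l := by
  rw [X_dvd_mul_iff, X_dvd_X, X_dvd_X]
  tauto

namespace Matrix

variable {R : Type*} [CommRing R]

theorem range_mulVecLin_mul_of_isUnit {n : Type*} [Fintype n] [DecidableEq n]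
    (A U : Matrix n n R) (hU : IsUnit U) :
    LinearMap.range (A * U).mulVecLin = LinearMap.range A.mulVecLin := by
  rw [mulVecLin_mul]
  exact LinearMap.range_comp_of_range_eq_top _
    (LinearMap.range_eq_top.2 (mulVec_surjective_iff_isUnit.2 hU))

theorem isUnit_unipotent_fin_three (a b : R) : IsUnit !![1, 0, a; 0, 1, b; 0, 0, (1 : R)] := by
  simp [isUnit_iff_isUnit_det, det_fin_three]

theorem det_linearPart_fin_three (x₀ x₁ x₂ p₀ p₁ p₂ : R) :
    !![x₀, x₀, p₀; x₁, 0, p₁; 0, x₂, p₂].det = x₁ * x₂ * p₀ - x₀ * x₂ * p₁ - x₀ * x₁ * p₂ := by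
  rw [det_fin_three]
  simp only [of_apply, cons_val', cons_val_zero, cons_val_one, cons_val, cons_val_fin_one]
  ring

theorem linearPart_mul_unipotent_fin_three (x₀ x₁ x₂ p₀ p₁ p₂ a b : R) :
    !![x₀, x₀, p₀; x₁, 0, p₁; 0, x₂, p₂] * !![1, 0, a; 0, 1, b; 0, 0, 1] =
      !![x₀, x₀, p₀ + x₀ * (a + b); x₁, 0, p₁ + x₁ * a; 0, x₂, p₂ + x₂ * b] := by
  rw [mul_fin_three]
  ring_nf

end Matrix

theorem same_det_implies_equivalent (k : Type*) [Field k]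
    (p₀ p₁ p₂ q₀ q₁ q₂ : MvPolynomial (Fin 3) k)
    (A B : Matrix (Fin 3) (Fin 3) (MvPolynomial (Fin 3) k))
    (hA : A = !![X 0, X 0, p₀; X 1, 0, p₁; 0, X 2, p₂])
    (hB : B = !![X 0, X 0, q₀; X 1, 0, q₁; 0, X 2, q₂])
    (hdet : A.det = B.det) :
    (∃ a b : MvPolynomial (Fin 3) k, B = A * !![1, 0, a; 0, 1, b; 0, 0, 1]) ∧
    Nonempty (((Fin 3 → MvPolynomial (Fin 3) k) ⧸ LinearMap.range A.mulVecLin) ≃ₗ[MvPolynomial (Fin 3) k]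
      ((Fin 3 → MvPolynomial (Fin 3) k) ⧸ LinearMap.range B.mulVecLin)) := by
  subst hA hB
  rw [Matrix.det_linearPart_fin_three, Matrix.det_linearPart_fin_three] at hdet
  obtain ⟨a, b, h₀, h₁, h₂⟩ := exists_eq_of_syzygy_minors (x₀ := X 0) (x₁ := X 1) (x₂ := X 2)
    (d₀ := q₀ - p₀) (d₁ := q₁ - p₁) (d₂ := q₂ - p₂) X_prime X_prime
    (not_X_dvd_X_mul_X (by decide) (by decide)) (not_X_dvd_X_mul_X (by decide) (by decide))
    (by linear_combination -hdet)
  rw [sub_eq_iff_eq_add'] at h₀ h₁ h₂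
  have hBA : !![X 0, X 0, q₀; X 1, 0, q₁; 0, X 2, q₂] =
      !![X 0, X 0, p₀; X 1, 0, p₁; 0, X 2, p₂] * !![1, 0, a; 0, 1, b; 0, 0, 1] := by
    rw [Matrix.linearPart_mul_unipotent_fin_three, ← h₀, ← h₁, ← h₂]
  refine ⟨⟨a, b, hBA⟩, ⟨Submodule.quotEquivOfEq _ _ ?_⟩⟩
  rw [hBA, Matrix.range_mulVecLin_mul_of_isUnit _ _ (Matrix.isUnit_unipotent_fin_three a b)]
end

section
/- For the matrix A = [[x₀, x₁, 0], [0, x₀, x₂²], [x₂, 0, x₁²]] over k[x₀,x₁,x₂], the 2×2 minors of A have empty common vanishing locus in ℙ²; i.e., the ideal generated by all 2×2 minors of A contains a power of the irrelevant ideal (x₀, x₁, x₂). -/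
/-!
Three of the `2 × 2` minors are `x₀²`, `x₁³` and `-x₂³`, so every variable lies in the radical of
the ideal of minors; a finitely generated ideal contained in the radical of `I` has a power
contained in `I`.
-/

open MvPolynomial

theorem Ideal.exists_span_pow_le_of_forall_pow_mem {R : Type*} [CommSemiring R] {s : Set R}
    (hs : s.Finite) {I : Ideal R} (h : ∀ x ∈ s, ∃ n : ℕ, x ^ n ∈ I) :
    ∃ N : ℕ, Ideal.span s ^ N ≤ I :=
  Ideal.exists_pow_le_of_le_radical_of_fg (Ideal.span_le.mpr h) (Submodule.fg_def.mpr ⟨s, hs, rfl⟩)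

section Minors

variable (k : Type*) [CommRing k]

noncomputable abbrev minorsMatrix : Matrix (Fin 3) (Fin 3) (MvPolynomial (Fin 3) k) :=
  !![X 0, X 1, 0; 0, X 0, X 2 ^ 2; X 2, 0, X 1 ^ 2]

noncomputable abbrev minorsIdeal : Ideal (MvPolynomial (Fin 3) k) :=
  Ideal.span {d | ∃ i j : Fin 3,
    d = ((minorsMatrix k).submatrix i.succAbove j.succAbove).det}

theorem minor_mem_minorsIdeal (i j : Fin 3) :
    ((minorsMatrix k).submatrix i.succAbove j.succAbove).det ∈ minorsIdeal k :=
  Ideal.subset_span ⟨i, j, rfl⟩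

theorem det_minorsMatrix_submatrix_two_two :
    ((minorsMatrix k).submatrix (2 : Fin 3).succAbove (2 : Fin 3).succAbove).det = X 0 ^ 2 := by
  simp [Matrix.det_fin_two, Fin.succAbove, pow_succ]

theorem det_minorsMatrix_submatrix_one_zero :
    ((minorsMatrix k).submatrix (1 : Fin 3).succAbove (0 : Fin 3).succAbove).det = X 1 ^ 3 := by
  simp [Matrix.det_fin_two, Fin.succAbove, pow_succ, mul_assoc]

theorem det_minorsMatrix_submatrix_zero_one :
    ((minorsMatrix k).submatrix (0 : Fin 3).succAbove (1 : Fin 3).succAbove).det = -X 2 ^ 3 := by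
  simp [Matrix.det_fin_two, Fin.succAbove, pow_succ, mul_assoc]

theorem X_pow_mem_minorsIdeal (i : Fin 3) : ∃ n : ℕ, X i ^ n ∈ minorsIdeal k := by
  fin_cases i
  · exact ⟨2, det_minorsMatrix_submatrix_two_two k ▸ minor_mem_minorsIdeal k 2 2⟩
  · exact ⟨3, det_minorsMatrix_submatrix_one_zero k ▸ minor_mem_minorsIdeal k 1 0⟩
  · refine ⟨3, neg_neg (X 2 ^ 3 : MvPolynomial (Fin 3) k) ▸ neg_mem_iff.mpr ?_⟩
    exact det_minorsMatrix_submatrix_zero_one k ▸ minor_mem_minorsIdeal k 0 1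

end Minors

theorem minors_no_common_zero_general (k : Type*) [Field k] :
    ∃ N : ℕ,
      (Ideal.span ({X 0, X 1, X 2} : Set (MvPolynomial (Fin 3) k))) ^ N ≤
        Ideal.span {d : MvPolynomial (Fin 3) k | ∃ i j : Fin 3,
          d = (Matrix.det ((!![X 0, X 1, 0; 0, X 0, X 2 ^ 2; X 2, 0, X 1 ^ 2]).submatrix
            i.succAbove j.succAbove))} := by
  refine Ideal.exists_span_pow_le_of_forall_pow_mem (Set.toFinite _) ?_
  rintro _ (rfl | rfl | rfl) <;> exact X_pow_mem_minorsIdeal k _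

theorem minors_no_common_zero (k : Type*) [Field k] [IsAlgClosed k] :
    ∃ N : ℕ,
      (Ideal.span ({X 0, X 1, X 2} : Set (MvPolynomial (Fin 3) k))) ^ N ≤
        Ideal.span {d : MvPolynomial (Fin 3) k | ∃ i j : Fin 3,
          d = (Matrix.det ((!![X 0, X 1, 0; 0, X 0, X 2 ^ 2; X 2, 0, X 1 ^ 2]).submatrix
            i.succAbove j.succAbove))} :=
  minors_no_common_zero_general k
end
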